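/- arXiv:1603.04210 — 3 statements merged into one kernel-verified Lean document; each statement's English description precedes it below -/
import Mathlib

section
/- For a finite family of intervals on the real line, the maximum size of a d-fold packing satisfies ν_{d-1} ≥ ν_d · (1 − 1/d) for every integer d ≥ 1, where ν_k is the maximum size of a k-fold packing. -/
/-!
Colour a `d`-fold packing greedily, adding intervals in order of their left endpoints: an interval
meeting the new one `p` and starting no later than it contains the left endpoint of `p`, so at
most `d - 1` colours are blocked. This splits the packing into `d` colour classes, none of which
contains two intervals through a common point. Deleting the smallest class of a maximum `d`-fold
packing, of size at most `ν_d / d`, leaves a `(d - 1)`-fold packing.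
-/

/-- A `k`-fold packing of a finite family `I` of closed intervals (given by their
endpoint pairs) is a subfamily `P ⊆ I` such that every real point lies in at most
`k` intervals of `P`. -/
def IsKFoldIntervalPacking (I : Finset (ℝ × ℝ)) (k : ℕ) (P : Finset (ℝ × ℝ)) : Prop :=
  P ⊆ I ∧ ∀ x : ℝ, (P.filter fun p => x ∈ Set.Icc p.1 p.2).card ≤ k

open Finset

noncomputable def intervalsThrough (P : Finset (ℝ × ℝ)) (x : ℝ) : Finset (ℝ × ℝ) :=
  P.filter fun p => x ∈ Set.Icc p.1 p.2

section intervalsThrough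

variable {P Q : Finset (ℝ × ℝ)} {p q : ℝ × ℝ} {x : ℝ}

@[simp]
theorem mem_intervalsThrough : q ∈ intervalsThrough P x ↔ q ∈ P ∧ x ∈ Set.Icc q.1 q.2 :=
  mem_filter

theorem intervalsThrough_mono (h : P ⊆ Q) : intervalsThrough P x ⊆ intervalsThrough Q x :=
  filter_subset_filter _ h

theorem intervalsThrough_insert_of_mem (hx : x ∈ Set.Icc p.1 p.2) :
    intervalsThrough (insert p P) x = insert p (intervalsThrough P x) :=
  (filter_insert _ _ _).trans (if_pos hx)

theorem intervalsThrough_insert_of_notMem (hx : x ∉ Set.Icc p.1 p.2) :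
    intervalsThrough (insert p P) x = intervalsThrough P x :=
  (filter_insert _ _ _).trans (if_neg hx)

theorem mem_intervalsThrough_fst_of_fst_le (hmax : ∀ r ∈ P, r.1 ≤ p.1)
    (hx : x ∈ Set.Icc p.1 p.2) (hq : q ∈ intervalsThrough P x) :
    q ∈ intervalsThrough P p.1 := by
  rw [mem_intervalsThrough] at hq ⊢
  exact ⟨hq.1, hmax q hq.1, hx.1.trans hq.2.2⟩

end intervalsThrough

theorem exists_color_notMem_image_intervalsThrough {d : ℕ} (hd : 0 < d)
    {P : Finset (ℝ × ℝ)} {p : ℝ × ℝ} (hp : p ∉ P) (hmax : ∀ r ∈ P, r.1 ≤ p.1)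
    (hdepth : ∀ x, #(intervalsThrough (insert p P) x) ≤ d) (c : ℝ × ℝ → Fin d) :
    ∃ i, ∀ x ∈ Set.Icc p.1 p.2, i ∉ c '' intervalsThrough P x := by
  by_cases hp₁₂ : p.1 ≤ p.2
  · have hfst : p.1 ∈ Set.Icc p.1 p.2 := ⟨le_rfl, hp₁₂⟩
    have hlt : #((intervalsThrough P p.1).image c) < #(univ : Finset (Fin d)) := by
      have := hdepth p.1
      rw [intervalsThrough_insert_of_mem hfst,
        card_insert_of_notMem fun h => hp (mem_intervalsThrough.1 h).1] at this
      rw [card_univ, Fintype.card_fin]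
      exact card_image_le.trans_lt this
    obtain ⟨i, -, hi⟩ := exists_mem_notMem_of_card_lt_card hlt
    refine ⟨i, fun x hx ⟨q, hq, hqi⟩ => hi ?_⟩
    rw [← hqi]
    exact mem_image_of_mem c (mem_intervalsThrough_fst_of_fst_le hmax hx hq)
  · exact ⟨⟨0, hd⟩, fun x hx => absurd (hx.1.trans hx.2) hp₁₂⟩

theorem exists_coloring_injOn_intervalsThrough {d : ℕ} (hd : 0 < d) (P : Finset (ℝ × ℝ))
    (hdepth : ∀ x, #(intervalsThrough P x) ≤ d) :
    ∃ c : ℝ × ℝ → Fin d, ∀ x, Set.InjOn c (intervalsThrough P x) := by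
  revert hdepth
  refine Finset.induction_on_max_value Prod.fst P ?_ ?_
  · exact fun _ => ⟨fun _ => ⟨0, hd⟩, fun x => by simp [intervalsThrough]⟩
  · intro p P hp hmax ih hdepth
    obtain ⟨c, hc⟩ := ih fun x =>
      (card_le_card (intervalsThrough_mono (subset_insert p P))).trans (hdepth x)
    obtain ⟨i, hi⟩ := exists_color_notMem_image_intervalsThrough hd hp hmax hdepth c
    have hagree : ∀ x, Set.EqOn c (Function.update c p i) (intervalsThrough P x) :=
      fun x q hq =>
        (Function.update_of_ne (ne_of_mem_of_not_mem (mem_intervalsThrough.1 hq).1 hp) _ _).symm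
    refine ⟨Function.update c p i, fun x => ?_⟩
    by_cases hx : x ∈ Set.Icc p.1 p.2
    · rw [intervalsThrough_insert_of_mem hx, coe_insert,
        Set.injOn_insert fun h => hp (mem_intervalsThrough.1 h).1, Function.update_self,
        ← (hagree x).image_eq]
      exact ⟨(hc x).congr (hagree x), hi x hx⟩
    · rw [intervalsThrough_insert_of_notMem hx]
      exact (hc x).congr (hagree x)

theorem isKFoldIntervalPacking_filter_color_ne {I P : Finset (ℝ × ℝ)} {d : ℕ}
    (hPI : P ⊆ I) (c : ℝ × ℝ → Fin d) (hc : ∀ x, Set.InjOn c (intervalsThrough P x))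
    (i : Fin d) :
    IsKFoldIntervalPacking I (d - 1) (P.filter fun p => c p ≠ i) := by
  refine ⟨(filter_subset _ P).trans hPI, fun x => ?_⟩
  have hmaps : ∀ q ∈ intervalsThrough (P.filter fun p => c p ≠ i) x, c q ∈ univ.erase i :=
    fun q hq => mem_erase.2 ⟨(mem_filter.1 (mem_intervalsThrough.1 hq).1).2, mem_univ _⟩
  have hinj : Set.InjOn c (intervalsThrough (P.filter fun p => c p ≠ i) x) :=
    (hc x).mono (intervalsThrough_mono (filter_subset _ P))
  show #(intervalsThrough _ x) ≤ d - 1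
  simpa [card_erase_of_mem] using card_le_card_of_injOn c hmaps hinj

/-- For a finite family of intervals on the real line, the maximum sizes of
`k`-fold packings satisfy `ν_{d-1} ≥ ν_d · (1 − 1/d)` for every `d ≥ 1`. -/
theorem stmt_1 (I : Finset (ℝ × ℝ)) (ν : ℕ → ℕ)
    (hν : ∀ k : ℕ, IsGreatest {n : ℕ | ∃ P : Finset (ℝ × ℝ),
      IsKFoldIntervalPacking I k P ∧ P.card = n} (ν k))
    (d : ℕ) (hd : 1 ≤ d) :
    (ν d : ℝ) * (1 - 1 / d) ≤ ν (d - 1) := by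
  obtain ⟨P, ⟨hPI, hPdepth⟩, hPcard⟩ := (hν d).1
  obtain ⟨c, hc⟩ := exists_coloring_injOn_intervalsThrough hd P hPdepth
  obtain ⟨i, -, hsmall⟩ := exists_card_fiber_le_of_card_le_nsmul (s := P) (f := c)
    (b := (#P : ℝ) / d) ⟨⟨0, hd⟩, mem_univ _⟩
    (by rw [card_univ, Fintype.card_fin, nsmul_eq_mul, mul_div_cancel₀ _ (by positivity)])
  have hrest : #(P.filter fun p => c p ≠ i) ≤ ν (d - 1) :=
    (hν (d - 1)).2 ⟨_, isKFoldIntervalPacking_filter_color_ne hPI c hc i, rfl⟩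
  have hsplit : (#(P.filter fun p => c p = i) : ℝ) + #(P.filter fun p => c p ≠ i) = ν d := by
    exact_mod_cast (card_filter_add_card_filter_not _).trans hPcard
  rw [hPcard] at hsmall
  calc (ν d : ℝ) * (1 - 1 / d) = ν d - ν d / d := by ring
    _ ≤ #(P.filter fun p => c p ≠ i) := by linarith
    _ ≤ ν (d - 1) := by exact_mod_cast hrest
end

section
/- Let S be a family of axis-parallel rectangles in an ambient rectangle R with input density at most d (every point lies in at most d rectangles of S). Suppose a subfamily T ⊆ S of rectangles is extended vertically (each upward or downward) so that the resulting configuration has density at most d everywhere. Then the multiset of x-projections of T has clique number at most 2d: every vertical line meets at most 2d rectangles of T. -/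
/-!
Split the rectangles of `T` whose x-projection contains `x₀` into those extended upward and
those extended downward. Every upward one contains the point `(x₀, H)` on the top edge of the
ambient rectangle and every downward one contains `(x₀, 0)` on the bottom edge, so the density
bound at these two points gives at most `d` rectangles of each kind.
-/

open Classical

/-- The axis-parallel rectangle with x-interval `[r.1.1, r.1.2]` and
y-interval `[r.2.1, r.2.2]`, as a subset of the plane. -/
def Rect (r : (ℝ × ℝ) × (ℝ × ℝ)) : Set (ℝ × ℝ) :=
  Set.Icc r.1.1 r.1.2 ×ˢ Set.Icc r.2.1 r.2.2

/-- The rectangle `r` extended upward to the top boundary `y = H`. -/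
def ExtUp (H : ℝ) (r : (ℝ × ℝ) × (ℝ × ℝ)) : Set (ℝ × ℝ) :=
  Set.Icc r.1.1 r.1.2 ×ˢ Set.Icc r.2.1 H

/-- The rectangle `r` extended downward to the bottom boundary `y = 0`. -/
def ExtDown (r : (ℝ × ℝ) × (ℝ × ℝ)) : Set (ℝ × ℝ) :=
  Set.Icc r.1.1 r.1.2 ×ˢ Set.Icc 0 r.2.2

abbrev Box := (ℝ × ℝ) × (ℝ × ℝ)

def extendedRect (H : ℝ) (T : Finset Box) (up : Box → Bool) (r : Box) : Set (ℝ × ℝ) :=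
  if r ∈ T then (if up r then ExtUp H r else ExtDown r) else Rect r

section

variable {H x : ℝ} {S T : Finset Box} {up : Box → Bool} {r : Box}

theorem top_mem_extendedRect (hr : r ∈ T) (hup : up r = true) (hx : x ∈ Set.Icc r.1.1 r.1.2)
    (hbot : r.2.1 ≤ H) : (x, H) ∈ extendedRect H T up r := by
  rw [extendedRect, if_pos hr, if_pos hup]
  exact ⟨hx, hbot, le_rfl⟩

theorem bottom_mem_extendedRect (hr : r ∈ T) (hdown : ¬up r = true)
    (hx : x ∈ Set.Icc r.1.1 r.1.2) (htop : 0 ≤ r.2.2) : (x, 0) ∈ extendedRect H T up r := by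
  rw [extendedRect, if_pos hr, if_neg hdown]
  exact ⟨hx, le_rfl, htop⟩

theorem card_upward_le_card_mem_top (hTS : T ⊆ S) (hbot : ∀ r ∈ T, r.2.1 ≤ H) :
    (T.filter fun r => x ∈ Set.Icc r.1.1 r.1.2 ∧ up r = true).card ≤
      (S.filter fun r => (x, H) ∈ extendedRect H T up r).card :=
  Finset.card_le_card fun r hr => by
    obtain ⟨hrT, hx, hup⟩ := Finset.mem_filter.1 hr
    exact Finset.mem_filter.2 ⟨hTS hrT, top_mem_extendedRect hrT hup hx (hbot r hrT)⟩

theorem card_downward_le_card_mem_bottom (hTS : T ⊆ S) (htop : ∀ r ∈ T, 0 ≤ r.2.2) :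
    (T.filter fun r => x ∈ Set.Icc r.1.1 r.1.2 ∧ ¬up r = true).card ≤
      (S.filter fun r => (x, 0) ∈ extendedRect H T up r).card :=
  Finset.card_le_card fun r hr => by
    obtain ⟨hrT, hx, hdown⟩ := Finset.mem_filter.1 hr
    exact Finset.mem_filter.2 ⟨hTS hrT, bottom_mem_extendedRect hrT hdown hx (htop r hrT)⟩

end

theorem stmt_8_general (W H : ℝ) (hH : 0 ≤ H)
    (S T : Finset ((ℝ × ℝ) × (ℝ × ℝ))) (d : ℕ)
    (up : (ℝ × ℝ) × (ℝ × ℝ) → Bool)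
    (hsub : T ⊆ S)
    (hinside : ∀ r ∈ S, r.1.1 ≤ r.1.2 ∧ r.2.1 ≤ r.2.2 ∧
      0 ≤ r.1.1 ∧ r.1.2 ≤ W ∧ 0 ≤ r.2.1 ∧ r.2.2 ≤ H)
    (hdens : ∀ p ∈ (Set.Icc 0 W ×ˢ Set.Icc 0 H : Set (ℝ × ℝ)),
      (S.filter fun r =>
        p ∈ (if r ∈ T then (if up r then ExtUp H r else ExtDown r) else Rect r)).card ≤ d) :
    ∀ x₀ ∈ Set.Icc 0 W,
      (T.filter fun r => x₀ ∈ Set.Icc r.1.1 r.1.2).card ≤ 2 * d := by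
  intro x₀ hx₀
  have hbot : ∀ r ∈ T, r.2.1 ≤ H := fun r hr =>
    have ⟨_, hy, _, _, _, hyH⟩ := hinside r (hsub hr); hy.trans hyH
  have htop : ∀ r ∈ T, 0 ≤ r.2.2 := fun r hr =>
    have ⟨_, hy, _, _, h0y, _⟩ := hinside r (hsub hr); h0y.trans hy
  rw [← Finset.card_filter_add_card_filter_not (fun r => up r = true), Finset.filter_filter,
    Finset.filter_filter, two_mul]
  exact add_le_add
    ((card_upward_le_card_mem_top hsub hbot).trans (hdens _ ⟨hx₀, hH, le_rfl⟩))
    ((card_downward_le_card_mem_bottom hsub htop).trans (hdens _ ⟨hx₀, le_rfl, hH⟩))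

/-- Let `S` be a family of axis-parallel rectangles inside the ambient rectangle
`[0,W] × [0,H]`.  Suppose a subfamily `T ⊆ S` is extended vertically (each
rectangle upward or downward, according to `up`) so that the resulting
configuration has density at most `d` everywhere in the ambient rectangle.  Then
every vertical line `x = x₀` (with `0 ≤ x₀ ≤ W`) meets at most `2d` rectangles of
`T`: the x-projections of `T` have clique number at most `2d`. -/
theorem stmt_8 (W H : ℝ) (hW : 0 ≤ W) (hH : 0 ≤ H)
    (S T : Finset ((ℝ × ℝ) × (ℝ × ℝ))) (d : ℕ)
    (up : (ℝ × ℝ) × (ℝ × ℝ) → Bool)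
    (hsub : T ⊆ S)
    (hinside : ∀ r ∈ S, r.1.1 ≤ r.1.2 ∧ r.2.1 ≤ r.2.2 ∧
      0 ≤ r.1.1 ∧ r.1.2 ≤ W ∧ 0 ≤ r.2.1 ∧ r.2.2 ≤ H)
    (hdens : ∀ p ∈ (Set.Icc 0 W ×ˢ Set.Icc 0 H : Set (ℝ × ℝ)),
      (S.filter fun r =>
        p ∈ (if r ∈ T then (if up r then ExtUp H r else ExtDown r) else Rect r)).card ≤ d) :
    ∀ x₀ ∈ Set.Icc 0 W,
      (T.filter fun r => x₀ ∈ Set.Icc r.1.1 r.1.2).card ≤ 2 * d :=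
  stmt_8_general W H hH S T d up hsub hinside hdens
end

section
/- In an m×m grid where each cell may contain a unit square, the following greedy is optimal for vertical extensions with density bound d: in each column, extend the d topmost squares upward and the d bottommost squares downward. Formally, the maximum number of squares in a single column that can be extended vertically with every grid cell covered by at most d (original or extended) squares equals min(n_c, 2d) whenever the column contains n_c squares, provided the squares in a column are at distinct rows. -/
/-- Feasibility of a vertical extension in a single column of an `m × m` grid with
density bound `d`: the squares of the column occupy the rows in `Rows` (distinct
rows), the squares with rows in `U` are extended upward (covering all cells at
rows `≥` their own), those with rows in `D` are extended downward (covering all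
cells at rows `≤` their own), each square is extended in at most one direction,
and every cell of the column is covered by at most `d` (original or extended)
squares. -/
def ColumnFeasible (m d : ℕ) (Rows U D : Finset (Fin m)) : Prop :=
  U ⊆ Rows ∧ D ⊆ Rows ∧ Disjoint U D ∧
    ∀ i : Fin m,
      (U.filter fun r => r ≤ i).card + (D.filter fun r => i ≤ r).card +
        (if i ∈ Rows \ (U ∪ D) then 1 else 0) ≤ d


/-!
At the cell of the highest upward-extended square every upward extension is present, so at most
`d` squares go up; symmetrically at most `d` go down, and at most `|Rows|` squares are
extended at all. Conversely, extend the `min d |Rows|` topmost squares upward and up to `d` of the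
lowest remaining squares downward: every cell is then covered only by upward extensions, only by
downward extensions, or only by its own square.
-/

open Finset

theorem Finset.exists_subset_card_eq_forall_sdiff_lt {α : Type*} [LinearOrder α]
    (s : Finset α) {k : ℕ} (hk : k ≤ #s) :
    ∃ t ⊆ s, #t = k ∧ ∀ x ∈ s \ t, ∀ y ∈ t, x < y := by
  induction k with
  | zero => exact ⟨∅, empty_subset s, card_empty, by simp⟩
  | succ k ih =>
    obtain ⟨t, hts, htk, hlt⟩ := ih (by omega)
    have hne : (s \ t).Nonempty := by
      rw [← card_pos, card_sdiff_of_subset hts]; omega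
    set a := (s \ t).max' hne
    have ha : a ∈ s \ t := max'_mem _ hne
    refine ⟨insert a t, insert_subset (mem_sdiff.1 ha).1 hts,
      by rw [card_insert_of_notMem (mem_sdiff.1 ha).2, htk], fun x hx y hy => ?_⟩
    have hx' : x ∈ s \ t ∧ x ≠ a := by
      simp only [mem_sdiff, mem_insert, not_or] at hx ⊢; tauto
    rcases mem_insert.1 hy with rfl | hy
    · exact lt_of_le_of_ne (le_max' _ x hx'.1) hx'.2
    · exact hlt x hx'.1 y hy

theorem Finset.exists_subset_card_eq_forall_lt_sdiff {α : Type*} [LinearOrder α]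
    (s : Finset α) {k : ℕ} (hk : k ≤ #s) :
    ∃ t ⊆ s, #t = k ∧ ∀ x ∈ s \ t, ∀ y ∈ t, y < x :=
  exists_subset_card_eq_forall_sdiff_lt (α := αᵒᵈ) s hk

section ColumnFeasible

variable {m d : ℕ} {Rows U D : Finset (Fin m)}

theorem ColumnFeasible.card_up_le (h : ColumnFeasible m d Rows U D) : #U ≤ d := by
  obtain rfl | hU := U.eq_empty_or_nonempty
  · exact Nat.zero_le d
  have htop := h.2.2.2 (U.max' hU)
  rw [filter_true_of_mem fun r hr => le_max' U r hr] at htop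
  omega

theorem ColumnFeasible.card_down_le (h : ColumnFeasible m d Rows U D) : #D ≤ d := by
  obtain rfl | hD := D.eq_empty_or_nonempty
  · exact Nat.zero_le d
  have hbot := h.2.2.2 (D.min' hD)
  rw [filter_true_of_mem fun r hr => min'_le D r hr] at hbot
  omega

theorem ColumnFeasible.card_add_card_le (h : ColumnFeasible m d Rows U D) :
    #U + #D ≤ min #Rows (2 * d) := by
  have hRows : #U + #D ≤ #Rows := by
    rw [← card_union_of_disjoint h.2.2.1]; exact card_le_card (union_subset h.1 h.2.1)
  have := h.card_up_le
  have := h.card_down_le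
  omega

theorem columnFeasible_of_top_of_bottom (hd : 1 ≤ d) (hU : U ⊆ Rows) (hD : D ⊆ Rows \ U)
    (hUd : #U ≤ d) (hDd : #D ≤ d) (hU_top : ∀ x ∈ Rows \ U, ∀ u ∈ U, x < u)
    (hD_bot : ∀ x ∈ Rows \ (U ∪ D), ∀ y ∈ D, y < x) :
    ColumnFeasible m d Rows U D := by
  refine ⟨hU, hD.trans sdiff_subset, disjoint_of_subset_right hD disjoint_sdiff, fun i => ?_⟩
  have hmid_sub : Rows \ (U ∪ D) ⊆ Rows \ U := sdiff_subset_sdiff subset_rfl subset_union_left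
  by_cases hUi : ∃ u ∈ U, u ≤ i
  · obtain ⟨u, hu, hui⟩ := hUi
    have hD_empty : D.filter (fun r => i ≤ r) = ∅ :=
      filter_eq_empty_iff.2 fun y hy hiy => (hU_top y (hD hy) u hu).not_ge (hui.trans hiy)
    have hi : i ∉ Rows \ (U ∪ D) := fun hi => (hU_top i (hmid_sub hi) u hu).not_ge hui
    rw [hD_empty, if_neg hi, card_empty, add_zero, add_zero]
    exact (card_filter_le U _).trans hUd
  · have hU_empty : U.filter (fun r => r ≤ i) = ∅ :=
      filter_eq_empty_iff.2 fun u hu hui => hUi ⟨u, hu, hui⟩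
    rw [hU_empty, card_empty, zero_add]
    by_cases hi : i ∈ Rows \ (U ∪ D)
    · have hD_empty : D.filter (fun r => i ≤ r) = ∅ :=
        filter_eq_empty_iff.2 fun y hy hiy => (hD_bot i hi y hy).not_ge hiy
      rw [hD_empty, if_pos hi, card_empty, zero_add]
      exact hd
    · rw [if_neg hi, add_zero]
      exact (card_filter_le D _).trans hDd

end ColumnFeasible

/-- In a single column of an `m × m` grid containing squares at the distinct rows
`Rows`, the maximum number of squares that can be extended vertically (each upward
or downward) while keeping every cell covered by at most `d ≥ 1` squares equals
`min (|Rows|) (2d)`; this is achieved by extending the `d` topmost squares upward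
and the `d` bottommost squares downward. -/
theorem stmt_16 (m d : ℕ) (hd : 1 ≤ d) (Rows : Finset (Fin m)) :
    IsGreatest {n : ℕ | ∃ U D : Finset (Fin m),
      ColumnFeasible m d Rows U D ∧ U.card + D.card = n}
      (min Rows.card (2 * d)) := by
  refine ⟨?_, fun n ⟨U, D, hf, hn⟩ => hn ▸ hf.card_add_card_le⟩
  obtain ⟨U, hU, hUcard, hU_top⟩ :=
    Rows.exists_subset_card_eq_forall_sdiff_lt (k := min d #Rows) (min_le_right _ _)
  obtain ⟨D, hD, hDcard, hD_bot⟩ :=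
    (Rows \ U).exists_subset_card_eq_forall_lt_sdiff (k := min d (#Rows - #U))
      (by rw [card_sdiff_of_subset hU]; exact min_le_right _ _)
  refine ⟨U, D, columnFeasible_of_top_of_bottom hd hU hD (by omega) (by omega) hU_top
    (fun x hx y hy => hD_bot x ?_ y hy), by omega⟩
  rwa [sdiff_sdiff_left]
end
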